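/- For every n ≥ 0, [x,y]^{2n+1} is not a product of two squares in the free group F₂ = ⟨x,y⟩ (theorem of Akhavan-Malayeri). -/

import Mathlib

/-- The free group on two generators. -/
abbrev F2 : Type := FreeGroup Bool

/-- The first generator. -/
def x : F2 := FreeGroup.of true
/-- The second generator. -/
def y : F2 := FreeGroup.of false

open scoped commutatorElement

/-!
Send `F₂` to the integer Heisenberg group by `x ↦ (1,0,0)`, `y ↦ (0,1,0)`. The commutator
`⁅x,y⁆` goes to the central element `(0,0,1)`, so `⁅x,y⁆ ^ m` has central coordinate `m`.
On the other hand, if `p² q²` is central then its image `2p + 2q` in the abelianization `ℤ²`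
vanishes, so `q ≡ p⁻¹` modulo the centre, and a direct computation shows that the central
coordinate of `p² q²` is even. The central coordinate plays the role of `φ : [F₂,F₂] → ℤ`.
-/

/-- The element `(a, b, c)` stands for the matrix `!![1, a, c; 0, 1, b; 0, 0, 1]`. -/
@[ext] structure Heisenberg where
  a : ℤ
  b : ℤ
  c : ℤ

namespace Heisenberg

instance : Mul Heisenberg := ⟨fun p q => ⟨p.a + q.a, p.b + q.b, p.c + q.c + p.a * q.b⟩⟩
instance : One Heisenberg := ⟨⟨0, 0, 0⟩⟩
instance : Inv Heisenberg := ⟨fun p => ⟨-p.a, -p.b, -p.c + p.a * p.b⟩⟩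

@[simp] lemma mul_a (p q : Heisenberg) : (p * q).a = p.a + q.a := rfl
@[simp] lemma mul_b (p q : Heisenberg) : (p * q).b = p.b + q.b := rfl
@[simp] lemma mul_c (p q : Heisenberg) : (p * q).c = p.c + q.c + p.a * q.b := rfl
@[simp] lemma one_a : (1 : Heisenberg).a = 0 := rfl
@[simp] lemma one_b : (1 : Heisenberg).b = 0 := rfl
@[simp] lemma one_c : (1 : Heisenberg).c = 0 := rfl
@[simp] lemma inv_a (p : Heisenberg) : p⁻¹.a = -p.a := rfl
@[simp] lemma inv_b (p : Heisenberg) : p⁻¹.b = -p.b := rfl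
@[simp] lemma inv_c (p : Heisenberg) : p⁻¹.c = -p.c + p.a * p.b := rfl

instance : Group Heisenberg where
  mul_assoc p q r := by ext <;> simp only [mul_a, mul_b, mul_c] <;> ring
  one_mul p := by ext <;> simp
  mul_one p := by ext <;> simp
  inv_mul_cancel p := by
    ext <;> simp only [mul_a, mul_b, mul_c, inv_a, inv_b, inv_c, one_a, one_b, one_c] <;> ring

@[simp] lemma sq_a (p : Heisenberg) : (p ^ 2).a = 2 * p.a := by rw [pow_two, mul_a]; ring
@[simp] lemma sq_b (p : Heisenberg) : (p ^ 2).b = 2 * p.b := by rw [pow_two, mul_b]; ring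
@[simp] lemma sq_c (p : Heisenberg) : (p ^ 2).c = 2 * p.c + p.a * p.b := by
  rw [pow_two, mul_c]; ring

theorem even_c_sq_mul_sq {p q : Heisenberg} (ha : (p ^ 2 * q ^ 2).a = 0)
    (hb : (p ^ 2 * q ^ 2).b = 0) : Even (p ^ 2 * q ^ 2).c := by
  simp only [mul_a, mul_b, sq_a, sq_b] at ha hb
  have hqa : q.a = -p.a := by omega
  have hqb : q.b = -p.b := by omega
  refine ⟨p.c + q.c - p.a * p.b, ?_⟩
  simp only [mul_c, sq_a, sq_b, sq_c, hqa, hqb]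
  ring

end Heisenberg

def toHeisenberg : F2 →* Heisenberg :=
  FreeGroup.lift fun i => if i then ⟨1, 0, 0⟩ else ⟨0, 1, 0⟩

lemma toHeisenberg_commutator : toHeisenberg ⁅x, y⁆ = ⟨0, 0, 1⟩ := by
  simp only [commutatorElement_def, map_mul, map_inv, toHeisenberg, x, y, FreeGroup.lift_apply_of]
  ext <;> simp

lemma toHeisenberg_commutator_pow (m : ℕ) : toHeisenberg (⁅x, y⁆ ^ m) = ⟨0, 0, m⟩ := by
  induction m with
  | zero => rfl
  | succ m ih =>
    rw [pow_succ, map_mul, ih, toHeisenberg_commutator]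
    ext <;> simp

/-- For every `n ≥ 0`, `⁅x,y⁆^(2n+1)` is not a product of two squares in the free group
on two generators (Akhavan-Malayeri). -/
theorem commutator_odd_pow_not_prod_two_squares (n : ℕ) :
    ¬ ∃ a b : F2, ⁅x, y⁆ ^ (2 * n + 1) = a ^ 2 * b ^ 2 := by
  rintro ⟨a, b, h⟩
  have himage : (⟨0, 0, (2 * n + 1 : ℕ)⟩ : Heisenberg) =
      toHeisenberg a ^ 2 * toHeisenberg b ^ 2 := by
    rw [← toHeisenberg_commutator_pow, h, map_mul, map_pow, map_pow]
  have heven := Heisenberg.even_c_sq_mul_sq (by rw [← himage]) (by rw [← himage])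
  rw [← himage] at heven
  exact Int.not_even_iff_odd.mpr (by simp) heven
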